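/- Let a, b ≥ 0 with a + b ≤ 1, and consider the Bell-diagonal two-qubit state ρ = a·|Φ⁺⟩⟨Φ⁺| + b·|Φ⁻⟩⟨Φ⁻| + ((1−a−b)/4)·I₄, where |Φ±⟩ = (e₀⊗e₀ ± e₁⊗e₁)/√2. If a + b + 2ab − 3(a² + b²) < 0, then ρ is not separable, i.e. ρ is entangled. -/

import Mathlib

open Matrix
open scoped Kronecker ComplexOrder

noncomputable section

def IsQState {n : Type*} [Fintype n] (ρ : Matrix n n ℂ) : Prop :=
  ρ.PosSemidef ∧ ρ.trace = 1

def IsSepState {dA dB : ℕ}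
    (ρ : Matrix (Fin dA × Fin dB) (Fin dA × Fin dB) ℂ) : Prop :=
  ∃ (k : ℕ) (p : Fin k → ℝ)
    (ρ₁ : Fin k → Matrix (Fin dA) (Fin dA) ℂ)
    (ρ₂ : Fin k → Matrix (Fin dB) (Fin dB) ℂ),
    (∀ m, 0 ≤ p m) ∧ (∑ m, p m = 1) ∧
    (∀ m, IsQState (ρ₁ m)) ∧ (∀ m, IsQState (ρ₂ m)) ∧
    ρ = ∑ m, (p m : ℂ) • (ρ₁ m ⊗ₖ ρ₂ m)

/-- The Bell vector `|Φ⁺⟩ = (e₀⊗e₀ + e₁⊗e₁)/√2`. -/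
def phiPlus : Fin 2 × Fin 2 → ℂ := fun p =>
  ((if p.1 = 0 ∧ p.2 = 0 then 1 else 0) + (if p.1 = 1 ∧ p.2 = 1 then 1 else 0))
    / ((Real.sqrt 2 : ℝ) : ℂ)

/-- The Bell vector `|Φ⁻⟩ = (e₀⊗e₀ − e₁⊗e₁)/√2`. -/
def phiMinus : Fin 2 × Fin 2 → ℂ := fun p =>
  ((if p.1 = 0 ∧ p.2 = 0 then 1 else 0) - (if p.1 = 1 ∧ p.2 = 1 then 1 else 0))
    / ((Real.sqrt 2 : ℝ) : ℂ)

/-!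
For `Φ = (e₀⊗e₀ + s e₁⊗e₁)/√2` with `|s| = 1` and a product of qubit states with diagonals
`(p₁, q₁)`, `(p₂, q₂)` and off-diagonal entries `z`, `w`, twice the fidelity `⟨Φ|ρ₁⊗ρ₂|Φ⟩` is
`p₁p₂ + q₁q₂ + 2 Re(s z w)`. Positivity gives `|z|² ≤ p₁q₁` and `|w|² ≤ p₂q₂`, so by AM-GM
`2|z w| ≤ p₁q₂ + q₁p₂` and the fidelity is at most `(p₁ + q₁)(p₂ + q₂)/2 = 1/2`; by linearity the
same bound holds for every separable state. The Bell-diagonal state has fidelity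
`F₊ = a + (1-a-b)/4` with `Φ⁺` and `F₋ = b + (1-a-b)/4` with `Φ⁻`, and `a + b + 2ab - 3(a² + b²)`
is exactly `4(a (1/2 - F₊) + b (1/2 - F₋))`, so for `a, b ≥ 0` it can only be negative if
`F₊ > 1/2` or `F₋ > 1/2`.
-/

lemma two_mul_mul_le_of_sq_le_mul {x y a b c d : ℝ} (ha : 0 ≤ a) (hb : 0 ≤ b) (hc : 0 ≤ c)
    (hd : 0 ≤ d) (hx : x ^ 2 ≤ a * b) (hy : y ^ 2 ≤ c * d) : 2 * (x * y) ≤ a * d + b * c := by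
  refine le_of_pow_le_pow_left₀ two_ne_zero (by positivity) ?_
  calc (2 * (x * y)) ^ 2 = 4 * (x ^ 2 * y ^ 2) := by ring
    _ ≤ 4 * ((a * b) * (c * d)) := by gcongr
    _ ≤ (a * d + b * c) ^ 2 := by nlinarith [sq_nonneg (a * d - b * c)]

lemma Matrix.PosSemidef.re_apply_self_nonneg {n : Type*} [Fintype n] {A : Matrix n n ℂ}
    (hA : A.PosSemidef) (i : n) : 0 ≤ (A i i).re :=
  (Complex.nonneg_iff.mp hA.diag_nonneg).1

lemma Matrix.PosSemidef.norm_sq_apply_le {n : Type*} [Fintype n] {A : Matrix n n ℂ}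
    (hA : A.PosSemidef) (i j : n) : ‖A i j‖ ^ 2 ≤ (A i i).re * (A j j).re := by
  have hdet := (hA.submatrix ![i, j]).det_nonneg
  simp only [det_fin_two, submatrix_apply, Matrix.cons_val_zero, Matrix.cons_val_one] at hdet
  rw [← hA.isHermitian.apply j i, ← hA.isHermitian.coe_re_apply_self i,
    ← hA.isHermitian.coe_re_apply_self j] at hdet
  simpa [Complex.mul_conj', ← Complex.ofReal_pow, ← Complex.ofReal_mul, ← Complex.ofReal_sub]
    using hdet

lemma IsQState.re_add_re {ρ : Matrix (Fin 2) (Fin 2) ℂ} (hρ : IsQState ρ) :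
    (ρ 0 0).re + (ρ 1 1).re = 1 := by
  simpa [trace_fin_two] using congrArg Complex.re hρ.2

lemma IsSepState.re_star_dotProduct_mulVec_le {dA dB : ℕ}
    {ρ : Matrix (Fin dA × Fin dB) (Fin dA × Fin dB) ℂ} (hρ : IsSepState ρ)
    (v : Fin dA × Fin dB → ℂ) {c : ℝ}
    (hc : ∀ ρ₁ ρ₂, IsQState ρ₁ → IsQState ρ₂ → (star v ⬝ᵥ (ρ₁ ⊗ₖ ρ₂) *ᵥ v).re ≤ c) :
    (star v ⬝ᵥ ρ *ᵥ v).re ≤ c := by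
  obtain ⟨k, p, ρ₁, ρ₂, hp, hp_sum, h₁, h₂, rfl⟩ := hρ
  simp only [sum_mulVec, dotProduct_sum, smul_mulVec, dotProduct_smul, Complex.re_sum,
    smul_eq_mul, Complex.re_ofReal_mul]
  calc ∑ m, p m * (star v ⬝ᵥ (ρ₁ m ⊗ₖ ρ₂ m) *ᵥ v).re ≤ ∑ m, p m * c :=
        Finset.sum_le_sum fun m _ => mul_le_mul_of_nonneg_left (hc _ _ (h₁ m) (h₂ m)) (hp m)
    _ = c := by rw [← Finset.sum_mul, hp_sum, one_mul]

lemma ofReal_sqrt_two_sq : ((Real.sqrt 2 : ℝ) : ℂ) ^ 2 = 2 := by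
  rw [← Complex.ofReal_pow, Real.sq_sqrt zero_le_two, Complex.ofReal_ofNat]

def bellVec (s : ℂ) : Fin 2 × Fin 2 → ℂ := fun p =>
  ((if p.1 = 0 ∧ p.2 = 0 then 1 else 0) + s * (if p.1 = 1 ∧ p.2 = 1 then 1 else 0))
    / ((Real.sqrt 2 : ℝ) : ℂ)

lemma phiPlus_eq_bellVec : phiPlus = bellVec 1 := by
  ext p
  simp only [phiPlus, bellVec, one_mul]

lemma phiMinus_eq_bellVec : phiMinus = bellVec (-1) := by
  ext p
  simp only [phiMinus, bellVec, sub_eq_add_neg, neg_one_mul]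

lemma star_bellVec_dotProduct_mulVec (s : ℂ) (M : Matrix (Fin 2 × Fin 2) (Fin 2 × Fin 2) ℂ) :
    star (bellVec s) ⬝ᵥ M *ᵥ bellVec s =
      (M (0, 0) (0, 0) + s * M (0, 0) (1, 1) + star s * M (1, 1) (0, 0)
        + star s * s * M (1, 1) (1, 1)) / 2 := by
  simp only [dotProduct, mulVec, Pi.star_apply, bellVec, Fintype.sum_prod_type, Fin.sum_univ_two,
    mul_ite, mul_one, mul_zero, star_div₀, star_add, RCLike.star_def,
    MonoidWithZeroHom.map_ite_one_zero, Complex.conj_ofReal, and_true, zero_ne_one, and_false,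
    ↓reduceIte, add_zero, one_ne_zero, zero_add, one_div, zero_div, map_zero, zero_mul]
  field_simp
  rw [ofReal_sqrt_two_sq]
  ring

lemma star_bellVec_dotProduct_kronecker_mulVec {s : ℂ} (hs : ‖s‖ = 1)
    {ρ₁ ρ₂ : Matrix (Fin 2) (Fin 2) ℂ} (h₁ : ρ₁.IsHermitian) (h₂ : ρ₂.IsHermitian) :
    star (bellVec s) ⬝ᵥ (ρ₁ ⊗ₖ ρ₂) *ᵥ bellVec s =
      (((ρ₁ 0 0).re * (ρ₂ 0 0).re + (ρ₁ 1 1).re * (ρ₂ 1 1).re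
        + 2 * (s * ρ₁ 0 1 * ρ₂ 0 1).re) / 2 : ℝ) := by
  have hss : star s * s = 1 := by
    rw [RCLike.star_def, Complex.conj_mul', hs, Complex.ofReal_one, one_pow]
  have hc := Complex.add_conj (s * ρ₁ 0 1 * ρ₂ 0 1)
  rw [star_bellVec_dotProduct_mulVec, hss]
  simp only [kroneckerMap_apply, ← h₁.apply 1 0, ← h₂.apply 1 0, RCLike.star_def, map_mul] at hc ⊢
  rw [← h₁.coe_re_apply_self 0, ← h₁.coe_re_apply_self 1, ← h₂.coe_re_apply_self 0,
    ← h₂.coe_re_apply_self 1]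
  push_cast at hc ⊢
  linear_combination hc / 2

lemma IsQState.re_star_bellVec_dotProduct_kronecker_mulVec_le {s : ℂ} (hs : ‖s‖ = 1)
    {ρ₁ ρ₂ : Matrix (Fin 2) (Fin 2) ℂ} (h₁ : IsQState ρ₁) (h₂ : IsQState ρ₂) :
    (star (bellVec s) ⬝ᵥ (ρ₁ ⊗ₖ ρ₂) *ᵥ bellVec s).re ≤ 1 / 2 := by
  rw [star_bellVec_dotProduct_kronecker_mulVec hs h₁.1.isHermitian h₂.1.isHermitian,
    Complex.ofReal_re]
  have hcross : 2 * (s * ρ₁ 0 1 * ρ₂ 0 1).re ≤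
      (ρ₁ 0 0).re * (ρ₂ 1 1).re + (ρ₁ 1 1).re * (ρ₂ 0 0).re :=
    calc 2 * (s * ρ₁ 0 1 * ρ₂ 0 1).re ≤ 2 * (‖ρ₁ 0 1‖ * ‖ρ₂ 0 1‖) := by
          have := Complex.re_le_norm (s * ρ₁ 0 1 * ρ₂ 0 1)
          rw [norm_mul, norm_mul, hs, one_mul] at this
          linarith
      _ ≤ _ := two_mul_mul_le_of_sq_le_mul (h₁.1.re_apply_self_nonneg 0)
          (h₁.1.re_apply_self_nonneg 1) (h₂.1.re_apply_self_nonneg 0)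
          (h₂.1.re_apply_self_nonneg 1) (h₁.1.norm_sq_apply_le 0 1) (h₂.1.norm_sq_apply_le 0 1)
  calc _ ≤ ((ρ₁ 0 0).re + (ρ₁ 1 1).re) * ((ρ₂ 0 0).re + (ρ₂ 1 1).re) / 2 := by linarith
    _ = 1 / 2 := by rw [h₁.re_add_re, h₂.re_add_re, one_mul]

lemma IsSepState.re_star_bellVec_dotProduct_mulVec_le
    {ρ : Matrix (Fin 2 × Fin 2) (Fin 2 × Fin 2) ℂ} (hρ : IsSepState ρ) {s : ℂ} (hs : ‖s‖ = 1) :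
    (star (bellVec s) ⬝ᵥ ρ *ᵥ bellVec s).re ≤ 1 / 2 :=
  hρ.re_star_dotProduct_mulVec_le _ fun _ _ h₁ h₂ =>
    h₁.re_star_bellVec_dotProduct_kronecker_mulVec_le hs h₂

def bellDiagonal (a b : ℝ) : Matrix (Fin 2 × Fin 2) (Fin 2 × Fin 2) ℂ :=
  (a : ℂ) • vecMulVec phiPlus (star phiPlus) + (b : ℂ) • vecMulVec phiMinus (star phiMinus)
    + (((1 - a - b) / 4 : ℝ) : ℂ) • (1 : Matrix (Fin 2 × Fin 2) (Fin 2 × Fin 2) ℂ)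

lemma star_bellVec_dotProduct_bellDiagonal_mulVec (a b e : ℝ) (he : e ^ 2 = 1) :
    star (bellVec e) ⬝ᵥ bellDiagonal a b *ᵥ bellVec e =
      (((a + b + e * (a - b)) / 2 + (1 - a - b) / 4 : ℝ) : ℂ) := by
  rw [star_bellVec_dotProduct_mulVec, bellDiagonal, phiPlus_eq_bellVec, phiMinus_eq_bellVec]
  have he' : (e : ℂ) ^ 2 = 1 := by exact_mod_cast he
  simp only [Complex.coe_smul, Complex.ofReal_div, Complex.ofReal_sub, Complex.ofReal_one,
    Complex.ofReal_ofNat, Matrix.add_apply, Matrix.smul_apply, vecMulVec_apply, bellVec, and_self,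
    ↓reduceIte, zero_ne_one, mul_zero, add_zero, one_div, Pi.star_apply, star_inv₀,
    RCLike.star_def, Complex.conj_ofReal, Complex.real_smul, one_apply_eq, smul_eq_mul, mul_one,
    one_ne_zero, zero_add, star_div₀, star_neg, star_one, ne_eq, Prod.mk.injEq, not_false_eq_true,
    one_apply_ne, Complex.ofReal_add, Complex.ofReal_mul]
  field_simp
  rw [ofReal_sqrt_two_sq]
  linear_combination (4 * (a + b : ℂ) + 2 * (1 - a - b)) * he'

theorem bell_diagonal_entangled_general
    (a b : ℝ) (ha : 0 ≤ a) (hb : 0 ≤ b)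
    (h : a + b + 2 * a * b - 3 * (a ^ 2 + b ^ 2) < 0) :
    ¬ IsSepState ((a : ℂ) • vecMulVec phiPlus (star phiPlus)
        + (b : ℂ) • vecMulVec phiMinus (star phiMinus)
        + (((1 - a - b) / 4 : ℝ) : ℂ) • (1 : Matrix (Fin 2 × Fin 2) (Fin 2 × Fin 2) ℂ)) := by
  change ¬ IsSepState (bellDiagonal a b)
  intro hsep
  have hplus := hsep.re_star_bellVec_dotProduct_mulVec_le (s := (1 : ℝ)) (by simp)
  have hminus := hsep.re_star_bellVec_dotProduct_mulVec_le (s := (-1 : ℝ)) (by simp)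
  rw [star_bellVec_dotProduct_bellDiagonal_mulVec a b _ (by norm_num), Complex.ofReal_re]
    at hplus hminus
  linarith [mul_nonneg ha (sub_nonneg.2 hplus), mul_nonneg hb (sub_nonneg.2 hminus)]

/-- a Bell-diagonal two-qubit state with
`a + b + 2ab − 3(a² + b²) < 0` is entangled. -/
theorem bell_diagonal_entangled
    (a b : ℝ) (ha : 0 ≤ a) (hb : 0 ≤ b) (hab : a + b ≤ 1)
    (h : a + b + 2 * a * b - 3 * (a ^ 2 + b ^ 2) < 0) :
    ¬ IsSepState ((a : ℂ) • vecMulVec phiPlus (star phiPlus)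
        + (b : ℂ) • vecMulVec phiMinus (star phiMinus)
        + (((1 - a - b) / 4 : ℝ) : ℂ) • (1 : Matrix (Fin 2 × Fin 2) (Fin 2 × Fin 2) ℂ)) :=
  bell_diagonal_entangled_general a b ha hb h
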